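/- Let g be a finite-dimensional real Lie algebra equipped with an inner product ⟨·,·⟩. There exists a bilinear product · on g satisfying, for all x,y,z ∈ g: x·y − y·x = ⁅x,y⁆, ⟨x·y, z⟩ + ⟨y, x·z⟩ = 0, and L_⁅x,y⁆ = L_x ∘ L_y − L_y ∘ L_x (where L_x(y) = x·y) if and only if g decomposes as an orthogonal direct sum g = b ⊕ u, where b is an abelian Lie subalgebra, u is an abelian Lie ideal, and for every b ∈ b the map ad_b is skew-adjoint with respect to ⟨·,·⟩, i.e. ⟨⁅b,x⁆, y⟩ + ⟨x, ⁅b,y⁆⟩ = 0 for all x,y ∈ g. (Milnor: a left-invariant Riemannian metric on a Lie group is flat if and only if its Lie algebra has such a decomposition.) -/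

import Mathlib

/-!
If `P` is a flat Levi-Civita product, `x ↦ P x` is a representation of `g` by `B`-skew maps.
Its kernel `u` is an abelian ideal on which `P x` acts as `ad x`, and its orthogonal complement
`b` is a subalgebra stable under every `P x`, on which `-tr (P x ∘ P y)` is an invariant inner
product `K`. For a `K`-orthonormal basis `(eᵢ)` of `b` and `w = ∑ P eᵢ eᵢ`, flatness gives
`P w = ∑ (P eᵢ)² + ad w`. Both `P w` and `ad w` are skew, hence traceless, while
`tr (P eᵢ)² ≤ 0` with equality only for `P eᵢ = 0`; so `P` vanishes on `b × b`. Hence `ad x = P x`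
is skew for `x ∈ b`, and `b` is abelian. Conversely, `P x = ad (π x)`, with `π` the projection
onto `b` along `u`, is a flat Levi-Civita product.
-/

open Module
open LinearMap (BilinForm)

namespace LinearMap.BilinForm

variable {V : Type*} [AddCommGroup V] [Module ℝ V] {B : BilinForm ℝ V}

def IsOrthonormal {ι : Type*} [DecidableEq ι] (B : BilinForm ℝ V) (e : Basis ι ℝ V) : Prop :=
  ∀ i j, B (e i) (e j) = if i = j then 1 else 0

lemma exists_isOrthonormal [FiniteDimensional ℝ V]
    (hsymm : ∀ x y, B x y = B y x) (hpos : ∀ x, x ≠ 0 → 0 < B x x) :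
    ∃ e : Basis (Fin (finrank ℝ V)) ℝ V, B.IsOrthonormal e := by
  obtain ⟨v, hv⟩ := B.exists_orthogonal_basis ⟨fun x y => hsymm x y⟩
  have hvpos i : 0 < B (v i) (v i) := hpos _ (v.ne_zero i)
  have hsqrt i : (√(B (v i) (v i)))⁻¹ ≠ 0 := by simpa using (Real.sqrt_pos.mpr (hvpos i)).ne'
  refine ⟨v.unitsSMul fun i => Units.mk0 _ (hsqrt i), fun i j => ?_⟩
  simp only [Basis.unitsSMul_apply, Units.smul_mk0, map_smul, LinearMap.smul_apply, smul_eq_mul]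
  split_ifs with h
  · subst h
    rw [← mul_assoc, ← mul_inv, Real.mul_self_sqrt (hvpos i).le, inv_mul_cancel₀ (hvpos i).ne']
  · rw [iIsOrtho_def.mp hv i j h, mul_zero, mul_zero]

lemma isCompl_orthogonal_of_pos [FiniteDimensional ℝ V]
    (hsymm : ∀ x y, B x y = B y x) (hpos : ∀ x, x ≠ 0 → 0 < B x x) (W : Submodule ℝ V) :
    IsCompl W (B.orthogonal W) := by
  refine (isCompl_orthogonal_iff_disjoint fun x y h => by rwa [hsymm]).mpr ?_
  refine Submodule.disjoint_def.mpr fun x hxW hxW' => ?_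
  by_contra hx
  exact (hpos x hx).ne' (mem_orthogonal_iff.mp hxW' x hxW)

lemma self_nonneg_of_pos (hpos : ∀ x, x ≠ 0 → 0 < B x x) (x : V) : 0 ≤ B x x := by
  obtain rfl | hx := eq_or_ne x 0
  · simp
  · exact (hpos x hx).le

namespace IsOrthonormal

variable {ι : Type*} [Fintype ι] [DecidableEq ι] {e : Basis ι ℝ V}

lemma repr_eq (he : B.IsOrthonormal e) (v : V) (i : ι) : e.repr v i = B v (e i) := by
  conv_rhs => rw [← e.sum_repr v]
  simp only [map_sum, map_smul, LinearMap.sum_apply, LinearMap.smul_apply, he _ i, smul_eq_mul,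
    mul_ite, mul_one, mul_zero, Finset.sum_ite_eq', Finset.mem_univ, if_true]

lemma sum_smul_eq (he : B.IsOrthonormal e) (v : V) : ∑ i, B v (e i) • e i = v := by
  simp_rw [← he.repr_eq, e.sum_repr]

lemma trace_eq (he : B.IsOrthonormal e) (f : V →ₗ[ℝ] V) :
    LinearMap.trace ℝ V f = ∑ i, B (f (e i)) (e i) := by
  simp [LinearMap.trace_eq_matrix_trace ℝ e, Matrix.trace, LinearMap.toMatrix_apply, he.repr_eq]

/-- The element `∑ i, e i ⊗ e i` is annihilated by every skew-adjoint `f`. -/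
lemma sum_apply_add_apply_eq_zero {W : Type*} [AddCommGroup W] [Module ℝ W]
    (hsymm : ∀ x y, B x y = B y x) (he : B.IsOrthonormal e)
    {f : V →ₗ[ℝ] V} (hf : ∀ x y, B (f x) y + B x (f y) = 0) (M : V →ₗ[ℝ] V →ₗ[ℝ] W) :
    ∑ i, (M (e i) (f (e i)) + M (f (e i)) (e i)) = 0 := by
  have expand₂ i : M (e i) (f (e i)) = ∑ j, B (f (e i)) (e j) • M (e i) (e j) := by
    conv_lhs => rw [← he.sum_smul_eq (f (e i))]
    simp only [map_sum, map_smul]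
  have expand₁ i : M (f (e i)) (e i) = ∑ j, B (f (e i)) (e j) • M (e j) (e i) := by
    conv_lhs => rw [← he.sum_smul_eq (f (e i))]
    simp only [map_sum, map_smul, LinearMap.sum_apply, LinearMap.smul_apply]
  simp only [Finset.sum_add_distrib, expand₁, expand₂]
  rw [Finset.sum_comm (γ := ι) (f := fun i j => B (f (e i)) (e j) • M (e j) (e i)),
    ← Finset.sum_add_distrib]
  refine Finset.sum_eq_zero fun i _ => ?_
  rw [← Finset.sum_add_distrib]
  refine Finset.sum_eq_zero fun j _ => ?_
  rw [← add_smul, hsymm (f (e j)), hf, zero_smul]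

lemma trace_comp_self_eq_of_skew (hsymm : ∀ x y, B x y = B y x) (he : B.IsOrthonormal e)
    {f : V →ₗ[ℝ] V} (hf : ∀ x y, B (f x) y + B x (f y) = 0) :
    LinearMap.trace ℝ V (f ∘ₗ f) = -∑ i, B (f (e i)) (f (e i)) := by
  rw [he.trace_eq, ← Finset.sum_neg_distrib]
  refine Finset.sum_congr rfl fun i _ => ?_
  rw [LinearMap.comp_apply, eq_neg_iff_add_eq_zero, hsymm (f (e i)), hf]

end IsOrthonormal

section Skew

variable [FiniteDimensional ℝ V] (hsymm : ∀ x y, B x y = B y x)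
  (hpos : ∀ x, x ≠ 0 → 0 < B x x) {f : V →ₗ[ℝ] V} (hf : ∀ x y, B (f x) y + B x (f y) = 0)
include hsymm hpos hf

lemma trace_eq_zero_of_skew : LinearMap.trace ℝ V f = 0 := by
  obtain ⟨e, he⟩ := exists_isOrthonormal hsymm hpos
  rw [he.trace_eq]
  refine Finset.sum_eq_zero fun i _ => ?_
  linarith [hf (e i) (e i), hsymm (e i) (f (e i))]

lemma trace_comp_self_nonpos_of_skew : LinearMap.trace ℝ V (f ∘ₗ f) ≤ 0 := by
  obtain ⟨e, he⟩ := exists_isOrthonormal hsymm hpos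
  rw [he.trace_comp_self_eq_of_skew hsymm hf, neg_nonpos]
  exact Finset.sum_nonneg fun i _ => self_nonneg_of_pos hpos _

lemma trace_comp_self_neg_of_skew (hf0 : f ≠ 0) : LinearMap.trace ℝ V (f ∘ₗ f) < 0 := by
  obtain ⟨e, he⟩ := exists_isOrthonormal hsymm hpos
  obtain ⟨i, hi⟩ : ∃ i, f (e i) ≠ 0 := by
    by_contra! h
    exact hf0 (e.ext h)
  rw [he.trace_comp_self_eq_of_skew hsymm hf, neg_neg_iff_pos]
  exact Finset.sum_pos' (fun j _ => self_nonneg_of_pos hpos _) ⟨i, Finset.mem_univ i, hpos _ hi⟩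

end Skew

end LinearMap.BilinForm

section TraceForm

variable {H V : Type*} [AddCommGroup V] [Module ℝ V]

section

variable [AddCommGroup H] [Module ℝ H]

noncomputable def negTraceForm (ρ : H →ₗ[ℝ] Module.End ℝ V) : BilinForm ℝ H :=
  -((LinearMap.mul ℝ (Module.End ℝ V)).compl₁₂ ρ ρ).compr₂ (LinearMap.trace ℝ V)

variable {ρ : H →ₗ[ℝ] Module.End ℝ V}

lemma negTraceForm_apply (x y : H) :
    negTraceForm ρ x y = -LinearMap.trace ℝ V (ρ x ∘ₗ ρ y) := rfl

lemma negTraceForm_comm (x y : H) : negTraceForm ρ x y = negTraceForm ρ y x := by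
  simp only [negTraceForm_apply, ← Module.End.mul_eq_comp, LinearMap.trace_mul_comm]

lemma negTraceForm_self_pos [FiniteDimensional ℝ V] {B : BilinForm ℝ V}
    (hsymm : ∀ v w, B v w = B w v) (hpos : ∀ v, v ≠ 0 → 0 < B v v)
    (hskew : ∀ x v w, B (ρ x v) w + B v (ρ x w) = 0) {x : H} (hx : ρ x ≠ 0) :
    0 < negTraceForm ρ x x := by
  rw [negTraceForm_apply, neg_pos]
  exact BilinForm.trace_comp_self_neg_of_skew hsymm hpos (hskew x) hx

end

lemma negTraceForm_lie_add [LieRing H] [LieAlgebra ℝ H] {ρ : H →ₗ[ℝ] Module.End ℝ V}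
    (hρ : ∀ x y, ρ ⁅x, y⁆ = ρ x ∘ₗ ρ y - ρ y ∘ₗ ρ x) (x y z : H) :
    negTraceForm ρ ⁅x, y⁆ z + negTraceForm ρ y ⁅x, z⁆ = 0 := by
  simp only [negTraceForm_apply, hρ, ← Module.End.mul_eq_comp, sub_mul, mul_sub, map_sub,
    mul_assoc]
  rw [LinearMap.trace_mul_comm ℝ (ρ x) (ρ y * ρ z), mul_assoc]
  abel

end TraceForm

section Flat

variable {g : Type*} [LieRing g] [LieAlgebra ℝ g]

noncomputable def restrictProduct (P : g →ₗ[ℝ] g →ₗ[ℝ] g) (b : LieSubalgebra ℝ g)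
    (hb : ∀ x ∈ b, ∀ y ∈ b, P x y ∈ b) : b →ₗ[ℝ] b →ₗ[ℝ] b :=
  LinearMap.codRestrict₂ (P.domRestrict₁₂ b.toSubmodule b.toSubmodule) b.toSubmodule.subtype
    Subtype.val_injective fun x y => by rw [Submodule.range_subtype]; exact hb x x.2 y y.2

@[simp]
lemma restrictProduct_apply {P : g →ₗ[ℝ] g →ₗ[ℝ] g} (b : LieSubalgebra ℝ g)
    (hb : ∀ x ∈ b, ∀ y ∈ b, P x y ∈ b) (x y : b) : (restrictProduct P b hb x y : g) = P x y :=
  LinearMap.codRestrict₂_apply (P.domRestrict₁₂ b.toSubmodule b.toSubmodule)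
    b.toSubmodule.subtype _ _ x y

structure IsFlatLeviCivitaProduct (B : BilinForm ℝ g) (P : g →ₗ[ℝ] g →ₗ[ℝ] g) : Prop where
  torsion_free : ∀ x y, P x y - P y x = ⁅x, y⁆
  skew : ∀ x y z, B (P x y) z + B y (P x z) = 0
  flat : ∀ x y, P ⁅x, y⁆ = P x ∘ₗ P y - P y ∘ₗ P x

structure IsMilnorDecomposition (B : BilinForm ℝ g) (b : LieSubalgebra ℝ g) (u : LieIdeal ℝ g) :
    Prop where
  lie_eq_zero_left : ∀ x ∈ b, ∀ y ∈ b, ⁅x, y⁆ = 0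
  lie_eq_zero_right : ∀ x ∈ u, ∀ y ∈ u, ⁅x, y⁆ = 0
  orthogonal : ∀ x ∈ b, ∀ y ∈ u, B x y = 0
  isCompl : IsCompl b.toSubmodule u.toSubmodule
  skew : ∀ x ∈ b, ∀ y z, B ⁅x, y⁆ z + B y ⁅x, z⁆ = 0

namespace IsFlatLeviCivitaProduct

variable {B K : BilinForm ℝ g} {P : g →ₗ[ℝ] g →ₗ[ℝ] g}

lemma apply_sum_eq {ι : Type*} [Fintype ι] [DecidableEq ι] {e : Basis ι ℝ g}
    (hP : IsFlatLeviCivitaProduct B P) (hKsymm : ∀ x y, K x y = K y x)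
    (hKinv : ∀ x y z : g, K ⁅x, y⁆ z + K y ⁅x, z⁆ = 0) (he : K.IsOrthonormal e) :
    P (∑ i, P (e i) (e i)) =
      ∑ i, P (e i) ∘ₗ P (e i) + LieAlgebra.ad ℝ g (∑ i, P (e i) (e i)) := by
  set w := ∑ i, P (e i) (e i)
  ext a
  suffices P a w = ∑ i, P (e i) (P (e i) a) by
    simp only [LinearMap.add_apply, LieAlgebra.ad_apply, ← hP.torsion_free w a, this,
      LinearMap.sum_apply, LinearMap.comp_apply]
    abel
  have step i : P a (P (e i) (e i))
      = P (e i) (P (e i) a) + (P (e i) ⁅a, e i⁆ + P ⁅a, e i⁆ (e i)) := by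
    have := congrArg (· (e i)) (hP.flat a (e i))
    simp only [LinearMap.sub_apply, LinearMap.comp_apply] at this
    rw [this, ← hP.torsion_free a (e i), map_sub]
    abel
  -- the correction terms cancel because `ad a` is `K`-skew
  have hcancel := he.sum_apply_add_apply_eq_zero hKsymm (f := LieAlgebra.ad ℝ g a)
    (fun x y => hKinv a x y) P
  simp only [LieAlgebra.ad_apply] at hcancel
  rw [map_sum, Finset.sum_congr rfl fun i _ => step i, Finset.sum_add_distrib, hcancel, add_zero]

theorem eq_zero_of_invariant [FiniteDimensional ℝ g] (hP : IsFlatLeviCivitaProduct B P)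
    (hBsymm : ∀ x y, B x y = B y x) (hBpos : ∀ x, x ≠ 0 → 0 < B x x)
    (hKsymm : ∀ x y, K x y = K y x) (hKpos : ∀ x, x ≠ 0 → 0 < K x x)
    (hKinv : ∀ x y z : g, K ⁅x, y⁆ z + K y ⁅x, z⁆ = 0) : P = 0 := by
  obtain ⟨e, he⟩ := K.exists_isOrthonormal hKsymm hKpos
  have htrace : ∑ i, LinearMap.trace ℝ g (P (e i) ∘ₗ P (e i)) = 0 := by
    have := congrArg (LinearMap.trace ℝ g) (hP.apply_sum_eq hKsymm hKinv he)
    rwa [BilinForm.trace_eq_zero_of_skew hBsymm hBpos (hP.skew _), map_add,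
      BilinForm.trace_eq_zero_of_skew hKsymm hKpos (f := LieAlgebra.ad ℝ g _) (hKinv _),
      add_zero, map_sum, eq_comm] at this
  have hzero := (Finset.sum_eq_zero_iff_of_nonpos fun i _ =>
    BilinForm.trace_comp_self_nonpos_of_skew hBsymm hBpos (hP.skew (e i))).mp htrace
  exact e.ext fun i => by_contra fun h =>
    (BilinForm.trace_comp_self_neg_of_skew hBsymm hBpos (hP.skew (e i)) h).ne
      (hzero i (Finset.mem_univ i))

section Kernel

variable (hP : IsFlatLeviCivitaProduct B P)
include hP

lemma apply_eq_lie_of_mem_ker (x : g) {v : g} (hv : v ∈ LinearMap.ker P) : P x v = ⁅x, v⁆ := by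
  rw [← hP.torsion_free, LinearMap.mem_ker.mp hv, LinearMap.zero_apply, sub_zero]

lemma lie_mem_ker (x : g) {v : g} (hv : v ∈ LinearMap.ker P) : ⁅x, v⁆ ∈ LinearMap.ker P := by
  rw [LinearMap.mem_ker, hP.flat, LinearMap.mem_ker.mp hv, LinearMap.comp_zero,
    LinearMap.zero_comp, sub_zero]

lemma lie_eq_zero_of_mem_ker {x y : g} (hx : x ∈ LinearMap.ker P) (hy : y ∈ LinearMap.ker P) :
    ⁅x, y⁆ = 0 := by
  rw [← hP.torsion_free, LinearMap.mem_ker.mp hx, LinearMap.mem_ker.mp hy, LinearMap.zero_apply,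
    LinearMap.zero_apply, sub_zero]

def kerIdeal : LieIdeal ℝ g where
  __ := LinearMap.ker P
  lie_mem := hP.lie_mem_ker _

lemma apply_mem_orthogonal_ker (hsymm : ∀ x y, B x y = B y x) (x : g) {y : g}
    (hy : y ∈ B.orthogonal (LinearMap.ker P)) : P x y ∈ B.orthogonal (LinearMap.ker P) := by
  refine BilinForm.mem_orthogonal_iff.mpr fun n hn => ?_
  have hxn : B (P x n) y = 0 :=
    BilinForm.mem_orthogonal_iff.mp hy _ (hP.apply_eq_lie_of_mem_ker x hn ▸ hP.lie_mem_ker x hn)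
  have := hP.skew x y n
  rw [hsymm y, hxn, add_zero] at this
  rw [hsymm, this]

def orthogonalKer (hsymm : ∀ x y, B x y = B y x) : LieSubalgebra ℝ g where
  __ := B.orthogonal (LinearMap.ker P)
  lie_mem' {x y} hx hy := by
    rw [← hP.torsion_free]
    exact sub_mem (hP.apply_mem_orthogonal_ker hsymm x hy)
      (hP.apply_mem_orthogonal_ker hsymm y hx)

end Kernel

section Restrict

lemma restrict (hP : IsFlatLeviCivitaProduct B P) (b : LieSubalgebra ℝ g)
    (hb : ∀ x ∈ b, ∀ y ∈ b, P x y ∈ b) :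
    IsFlatLeviCivitaProduct (B.restrict b.toSubmodule) (restrictProduct P b hb) where
  torsion_free x y := Subtype.ext <| by simp [hP.torsion_free]
  skew x y z := by
    change B (restrictProduct P b hb x y : g) z + B y (restrictProduct P b hb x z : g) = 0
    simpa using hP.skew x y z
  flat x y := by
    ext z
    simp [hP.flat]

end Restrict

section Decomposition

variable [FiniteDimensional ℝ g] (hP : IsFlatLeviCivitaProduct B P)
  (hsymm : ∀ x y, B x y = B y x) (hpos : ∀ x, x ≠ 0 → 0 < B x x)
include hP hsymm hpos

lemma apply_eq_zero_of_mem_orthogonalKer {x y : g} (hx : x ∈ hP.orthogonalKer hsymm)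
    (hy : y ∈ hP.orthogonalKer hsymm) : P x y = 0 := by
  set b := hP.orthogonalKer hsymm
  have hb : ∀ x ∈ b, ∀ y ∈ b, P x y ∈ b := fun x _ _ hy => hP.apply_mem_orthogonal_ker hsymm x hy
  have hKpos (x : b) (hx : x ≠ 0) : 0 < (negTraceForm P).restrict b.toSubmodule x x := by
    refine negTraceForm_self_pos hsymm hpos hP.skew fun h => hx (Subtype.ext ?_)
    have hmem : (x : g) ∈ LinearMap.ker P ⊓ B.orthogonal (LinearMap.ker P) := ⟨h, x.2⟩
    rwa [(BilinForm.isCompl_orthogonal_of_pos hsymm hpos _).inf_eq_bot] at hmem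
  have hzero := (hP.restrict b hb).eq_zero_of_invariant (fun x y => hsymm x y)
    (fun x hx => hpos x (by simpa using hx)) (fun x y => negTraceForm_comm (x : g) y) hKpos
    (fun x y z => negTraceForm_lie_add hP.flat (x : g) y z)
  simpa using congrArg (fun L => (L ⟨x, hx⟩ ⟨y, hy⟩ : g)) hzero

lemma apply_eq_zero_of_right_mem_orthogonalKer {x : g} (hx : x ∈ hP.orthogonalKer hsymm)
    (y : g) : P y x = 0 := by
  suffices LinearMap.ker P ⊔ B.orthogonal (LinearMap.ker P) ≤ LinearMap.ker (P.flip x) by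
    rw [(BilinForm.isCompl_orthogonal_of_pos hsymm hpos _).sup_eq_top] at this
    exact this Submodule.mem_top
  refine sup_le (fun y hy => ?_) (fun y hy => ?_)
  · simp [LinearMap.mem_ker.mp hy]
  · exact hP.apply_eq_zero_of_mem_orthogonalKer hsymm hpos hy hx

lemma lie_eq_apply_of_mem_orthogonalKer {x : g} (hx : x ∈ hP.orthogonalKer hsymm) (y : g) :
    ⁅x, y⁆ = P x y := by
  rw [← hP.torsion_free, hP.apply_eq_zero_of_right_mem_orthogonalKer hsymm hpos hx, sub_zero]

theorem isMilnorDecomposition :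
    IsMilnorDecomposition B (hP.orthogonalKer hsymm) hP.kerIdeal where
  lie_eq_zero_left x hx y hy := by
    rw [hP.lie_eq_apply_of_mem_orthogonalKer hsymm hpos hx,
      hP.apply_eq_zero_of_mem_orthogonalKer hsymm hpos hx hy]
  lie_eq_zero_right _ hx _ hy := hP.lie_eq_zero_of_mem_ker hx hy
  orthogonal x hx y hy := by
    rw [hsymm]
    exact BilinForm.mem_orthogonal_iff.mp hx y hy
  isCompl := (BilinForm.isCompl_orthogonal_of_pos hsymm hpos _).symm
  skew x hx y z := by
    rw [hP.lie_eq_apply_of_mem_orthogonalKer hsymm hpos hx,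
      hP.lie_eq_apply_of_mem_orthogonalKer hsymm hpos hx]
    exact hP.skew x y z

end Decomposition

end IsFlatLeviCivitaProduct

namespace IsMilnorDecomposition

variable {B : BilinForm ℝ g} {b : LieSubalgebra ℝ g} {u : LieIdeal ℝ g}
  (h : IsMilnorDecomposition B b u)
include h

lemma add_lie_add_eq {a c p q : g} (ha : a ∈ b) (hc : c ∈ b) (hp : p ∈ u) (hq : q ∈ u) :
    ⁅a + p, c + q⁆ = ⁅a, q⁆ + ⁅p, c⁆ := by
  rw [add_lie, lie_add, lie_add, h.lie_eq_zero_left a ha c hc, h.lie_eq_zero_right p hp q hq,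
    zero_add, add_zero]

lemma lie_mem_ideal (x y : g) : ⁅x, y⁆ ∈ u := by
  rw [← b.toSubmodule.projection_add_projection_eq_self h.isCompl x,
    ← b.toSubmodule.projection_add_projection_eq_self h.isCompl y,
    h.add_lie_add_eq (Submodule.projection_apply_mem _ _) (Submodule.projection_apply_mem _ _)
      (Submodule.projection_apply_mem _ _) (Submodule.projection_apply_mem _ _)]
  exact add_mem (u.lie_mem (Submodule.projection_apply_mem _ _))
    (lie_mem_left ℝ g u _ _ (Submodule.projection_apply_mem _ _))

noncomputable def adProjection : g →ₗ[ℝ] g →ₗ[ℝ] g :=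
  (LieAlgebra.ad ℝ g : g →ₗ[ℝ] Module.End ℝ g) ∘ₗ b.toSubmodule.projection u h.isCompl

lemma adProjection_add {a p : g} (ha : a ∈ b) (hp : p ∈ u) :
    h.adProjection (a + p) = LieAlgebra.ad ℝ g a := by
  simp [adProjection, Submodule.projection_apply_of_mem_left _ ha,
    Submodule.projection_apply_of_mem_right _ hp]

lemma adProjection_of_mem_right {p : g} (hp : p ∈ u) : h.adProjection p = 0 := by
  simpa using h.adProjection_add b.zero_mem hp

theorem isFlatLeviCivitaProduct_adProjection : IsFlatLeviCivitaProduct B h.adProjection := by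
  have hdecomp := Submodule.codisjoint_iff_exists_add_eq.mp h.isCompl.codisjoint
  refine ⟨fun x y => ?_, fun x y z => ?_, fun x y => ?_⟩
  · obtain ⟨a, p, ha, hp, rfl⟩ := hdecomp x
    obtain ⟨c, q, hc, hq, rfl⟩ := hdecomp y
    rw [h.adProjection_add ha hp, h.adProjection_add hc hq, h.add_lie_add_eq ha hc hp hq]
    simp only [LieAlgebra.ad_apply, lie_add, h.lie_eq_zero_left a ha c hc,
      h.lie_eq_zero_left c hc a ha, ← lie_skew p c]
    abel
  · obtain ⟨a, p, ha, hp, rfl⟩ := hdecomp x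
    simpa [h.adProjection_add ha hp] using h.skew a ha y z
  · obtain ⟨a, p, ha, hp, rfl⟩ := hdecomp x
    obtain ⟨c, q, hc, hq, rfl⟩ := hdecomp y
    ext z
    simp only [h.adProjection_of_mem_right (h.lie_mem_ideal _ _), h.adProjection_add ha hp,
      h.adProjection_add hc hq, LinearMap.sub_apply, LinearMap.comp_apply,
      LieAlgebra.ad_apply, LinearMap.zero_apply]
    rw [← lie_lie, h.lie_eq_zero_left a ha c hc, zero_lie]

end IsMilnorDecomposition

end Flat

theorem milnor_flat_characterization
    (g : Type*) [LieRing g] [LieAlgebra ℝ g] [FiniteDimensional ℝ g]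
    (B : LinearMap.BilinForm ℝ g)
    (hsymm : ∀ x y : g, B x y = B y x)
    (hpos : ∀ x : g, x ≠ 0 → 0 < B x x) :
    (∃ P : g →ₗ[ℝ] g →ₗ[ℝ] g,
        (∀ x y : g, P x y - P y x = ⁅x, y⁆) ∧
        (∀ x y z : g, B (P x y) z + B y (P x z) = 0) ∧
        (∀ x y : g, P ⁅x, y⁆ = P x ∘ₗ P y - P y ∘ₗ P x)) ↔
    (∃ (b : LieSubalgebra ℝ g) (u : LieIdeal ℝ g),
        (∀ x ∈ b, ∀ y ∈ b, ⁅x, y⁆ = (0 : g)) ∧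
        (∀ x ∈ u, ∀ y ∈ u, ⁅x, y⁆ = (0 : g)) ∧
        (∀ x ∈ b, ∀ y ∈ u, B x y = 0) ∧
        ((b : Submodule ℝ g) ⊔ (u : Submodule ℝ g) = ⊤) ∧
        ((b : Submodule ℝ g) ⊓ (u : Submodule ℝ g) = ⊥) ∧
        (∀ x ∈ b, ∀ y z : g, B ⁅x, y⁆ z + B y ⁅x, z⁆ = 0)) := by
  constructor
  · rintro ⟨P, hT, hS, hF⟩
    have h := (IsFlatLeviCivitaProduct.mk hT hS hF).isMilnorDecomposition hsymm hpos
    exact ⟨_, _, h.lie_eq_zero_left, h.lie_eq_zero_right, h.orthogonal, h.isCompl.sup_eq_top,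
      h.isCompl.inf_eq_bot, h.skew⟩
  · rintro ⟨b, u, hb, hu, horth, hsup, hinf, hskew⟩
    have h : IsMilnorDecomposition B b u :=
      ⟨hb, hu, horth, ⟨disjoint_iff.mpr hinf, codisjoint_iff.mpr hsup⟩, hskew⟩
    obtain ⟨hT, hS, hF⟩ := h.isFlatLeviCivitaProduct_adProjection
    exact ⟨_, hT, hS, hF⟩
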